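/- The modal logic KB enjoys ULIP; moreover, for every formula φ and all finite sets P, Q of propositional variables there exists a uniform Lyndon interpolant θ of (φ,P,Q) in KB with d(θ) ≤ d(φ). -/

import Mathlib

/-- Modal formulas: propositional variables, ⊥, →, □. -/
inductive Formula : Type
  | var : ℕ → Formula
  | bot : Formula
  | imp : Formula → Formula → Formula
  | box : Formula → Formula
  deriving DecidableEq

namespace Formula

def neg (φ : Formula) : Formula := φ.imp bot

def top : Formula := neg bot

def and (φ ψ : Formula) : Formula := (φ.imp ψ.neg).neg

def iff (φ ψ : Formula) : Formula := (φ.imp ψ).and (ψ.imp φ)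

def dia (φ : Formula) : Formula := φ.neg.box.neg

/-- Variables occurring positively (`true`) / negatively (`false`). -/
def vsgn : Formula → Bool → Finset ℕ
  | var p, true => {p}
  | var _, false => ∅
  | bot, _ => ∅
  | imp φ ψ, b => vsgn φ (!b) ∪ vsgn ψ b
  | box φ, b => vsgn φ b

def vpos (φ : Formula) : Finset ℕ := vsgn φ true
def vneg (φ : Formula) : Finset ℕ := vsgn φ false
def vars (φ : Formula) : Finset ℕ := vpos φ ∪ vneg φ

/-- Modal depth. -/
def depth : Formula → ℕ
  | var _ => 0
  | bot => 0
  | imp φ ψ => max (depth φ) (depth ψ)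
  | box φ => depth φ + 1

/-- Uniform substitution. -/
def subst (σ : ℕ → Formula) : Formula → Formula
  | var p => σ p
  | bot => bot
  | imp φ ψ => (subst σ φ).imp (subst σ ψ)
  | box φ => (subst σ φ).box

/-- The set of subformulas. -/
def subfmls : Formula → Finset Formula
  | var p => {var p}
  | bot => {bot}
  | imp φ ψ => insert (imp φ ψ) (subfmls φ ∪ subfmls ψ)
  | box φ => insert (box φ) (subfmls φ)

/-- n(φ) = |{ψ : □ψ ∈ Sub(φ)}|. -/
def boxCount (φ : Formula) : ℕ :=
  ((subfmls φ).filter fun ψ => box ψ ∈ subfmls φ).card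

/-- The translation ⋆ : p⋆ = p, ⊥⋆ = ⊥, (φ→ψ)⋆ = φ⋆→ψ⋆, (□φ)⋆ = φ⋆ ∧ □φ⋆. -/
def star : Formula → Formula
  | var p => var p
  | bot => bot
  | imp φ ψ => (star φ).imp (star ψ)
  | box φ => (star φ).and (star φ).box

end Formula

/-- Propositional tautology: true under every valuation treating variables and
boxed formulas as atoms. -/
def Tautology (φ : Formula) : Prop :=
  ∀ v : Formula → Bool, v .bot = false →
    (∀ ψ θ : Formula, v (ψ.imp θ) = (!v ψ || v θ)) → v φ = true

/-- A normal modal logic: contains all tautologies and □(p→q)→(□p→□q), and is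
closed under modus ponens, necessitation and uniform substitution. -/
structure IsNormal (L : Set Formula) : Prop where
  taut : ∀ φ, Tautology φ → φ ∈ L
  axK : ((Formula.var 0).imp (Formula.var 1)).box.imp
      ((Formula.var 0).box.imp (Formula.var 1).box) ∈ L
  mp : ∀ φ ψ : Formula, φ.imp ψ ∈ L → φ ∈ L → ψ ∈ L
  nec : ∀ φ : Formula, φ ∈ L → φ.box ∈ L
  subst_mem : ∀ φ ∈ L, ∀ σ : ℕ → Formula, Formula.subst σ φ ∈ L

/-- The least normal modal logic including `X`. -/
def NormalExt (X : Set Formula) : Set Formula :=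
  ⋂₀ {L : Set Formula | IsNormal L ∧ X ⊆ L}

/-- The least normal modal logic K. -/
def TheoryK : Set Formula := NormalExt ∅

def axT : Formula := (Formula.var 0).box.imp (Formula.var 0)
def ax4 : Formula := (Formula.var 0).box.imp (Formula.var 0).box.box
def axB : Formula := (Formula.var 0).imp (Formula.var 0).dia.box
def axD : Formula := Formula.bot.box.neg
def axGL : Formula := ((Formula.var 0).box.imp (Formula.var 0)).box.imp (Formula.var 0).box
def axGrz : Formula :=
  (((Formula.var 0).imp (Formula.var 0).box).box.imp (Formula.var 0)).box.imp (Formula.var 0)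

def TheoryKD : Set Formula := NormalExt {axD}
def TheoryKT : Set Formula := NormalExt {axT}
def TheoryKB : Set Formula := NormalExt {axB}
def TheoryKDB : Set Formula := NormalExt {axD, axB}
def TheoryKTB : Set Formula := NormalExt {axT, axB}
def TheoryK4 : Set Formula := NormalExt {ax4}
def TheoryS4 : Set Formula := NormalExt {axT, ax4}
def TheoryGL : Set Formula := NormalExt {axGL}
def TheoryGrz : Set Formula := NormalExt {axGrz}

/-- L⋆ := {φ : L ⊢ φ⋆}. -/
def starLogic (L : Set Formula) : Set Formula := {φ | Formula.star φ ∈ L}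

/-- θ is a uniform Lyndon interpolant of (φ, P, Q) in L. -/
def IsULInterpolant (L : Set Formula) (φ : Formula) (P Q : Finset ℕ) (θ : Formula) : Prop :=
  θ.vpos ⊆ φ.vpos \ P ∧ θ.vneg ⊆ φ.vneg \ Q ∧ φ.imp θ ∈ L ∧
    ∀ ψ : Formula, ψ.vpos ∩ P = ∅ → ψ.vneg ∩ Q = ∅ → φ.imp ψ ∈ L → θ.imp ψ ∈ L

/-- The uniform Lyndon interpolation property. -/
def ULIP (L : Set Formula) : Prop :=
  ∀ (φ : Formula) (P Q : Finset ℕ), ∃ θ : Formula, IsULInterpolant L φ P Q θ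

/-- The uniform interpolation property. -/
def UIP (L : Set Formula) : Prop :=
  ∀ (φ : Formula) (P : Finset ℕ), ∃ θ : Formula,
    θ.vars ⊆ φ.vars \ P ∧ φ.imp θ ∈ L ∧
      ∀ ψ : Formula, ψ.vars ∩ P = ∅ → φ.imp ψ ∈ L → θ.imp ψ ∈ L

/-- The Lyndon interpolation property. -/
def LIP (L : Set Formula) : Prop :=
  ∀ φ ψ : Formula, φ.imp ψ ∈ L → ∃ θ : Formula,
    θ.vpos ⊆ φ.vpos ∩ ψ.vpos ∧ θ.vneg ⊆ φ.vneg ∩ ψ.vneg ∧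
      φ.imp θ ∈ L ∧ θ.imp ψ ∈ L

/-- A Kripke model. -/
structure KripkeModel where
  W : Type
  nonempty : Nonempty W
  rel : W → W → Prop
  val : W → ℕ → Prop

/-- Satisfaction in a Kripke model. -/
def KripkeModel.Sat (M : KripkeModel) : Formula → M.W → Prop
  | .var p, w => M.val w p
  | .bot, _ => False
  | .imp φ ψ, w => M.Sat φ w → M.Sat ψ w
  | .box φ, w => ∀ x, M.rel w x → M.Sat φ x

/-- A (P,Q)-formula: v⁺(φ) ⊆ P and v⁻(φ) ⊆ Q. -/
def PQFormula (P Q : Finset ℕ) (φ : Formula) : Prop := φ.vpos ⊆ P ∧ φ.vneg ⊆ Q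

/-- `F n P Q` is a finite list of (P,Q)-formulas of modal depth ≤ n such that every
(P,Q)-formula of modal depth ≤ n is K-provably equivalent to some member. -/
def IsFamily (F : ℕ → Finset ℕ → Finset ℕ → List Formula) : Prop :=
  ∀ (n : ℕ) (P Q : Finset ℕ),
    (∀ φ ∈ F n P Q, PQFormula P Q φ ∧ φ.depth ≤ n) ∧
    ∀ ψ : Formula, PQFormula P Q ψ → ψ.depth ≤ n →
      ∃ φ ∈ F n P Q, Formula.iff φ ψ ∈ TheoryK

/-- Th_n^{(P,Q)}(w) = {φ ∈ F_n^{(P,Q)} : w ⊩ φ}. -/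
def Th (F : ℕ → Finset ℕ → Finset ℕ → List Formula) (M : KripkeModel)
    (n : ℕ) (P Q : Finset ℕ) (w : M.W) : Set Formula :=
  {φ | φ ∈ F n P Q ∧ M.Sat φ w}

def conjList : List Formula → Formula
  | [] => Formula.top
  | φ :: l => φ.and (conjList l)

open Classical in
/-- C_n^{(P,Q)}(w) = ⋀ Th_n^{(P,Q)}(w). -/
noncomputable def Cfml (F : ℕ → Finset ℕ → Finset ℕ → List Formula) (M : KripkeModel)
    (n : ℕ) (P Q : Finset ℕ) (w : M.W) : Formula :=
  conjList ((F n P Q).filter fun φ => decide (M.Sat φ w))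

/-- Layered (P,Q)-bisimulation between M and M'. -/
def LayeredBisim (P Q : Finset ℕ) (M M' : KripkeModel)
    (Z : M.W → ℕ → M'.W → Prop) : Prop :=
  (∀ w n w', Z w n w' →
    (∀ p ∈ P, M.val w p → M'.val w' p) ∧ (∀ q ∈ Q, ¬M.val w q → ¬M'.val w' q)) ∧
  (∀ w n w', Z w (n + 1) w' → ∀ x, M.rel w x → ∃ x', M'.rel w' x' ∧ Z x n x') ∧
  (∀ w n w', Z w (n + 1) w' → ∀ x', M'.rel w' x' → ∃ x, M.rel w x ∧ Z x n x')

/-- Downward closedness of a layered bisimulation. -/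
def DownClosed (M M' : KripkeModel) (Z : M.W → ℕ → M'.W → Prop) : Prop :=
  ∀ w n w', Z w n w' → ∀ m ≤ n, Z w m w'

/-- A class of Kripke models has ULIP. -/
def ClassULIP (F : ℕ → Finset ℕ → Finset ℕ → List Formula) (Cl : Set KripkeModel) : Prop :=
  ∀ P1 P2 P3 Q1 Q2 Q3 : Finset ℕ,
    Disjoint P1 P2 → Disjoint P1 P3 → Disjoint P2 P3 →
    Disjoint Q1 Q2 → Disjoint Q1 Q3 → Disjoint Q2 Q3 →
    ∀ M : KripkeModel, M ∈ Cl → ∀ M' : KripkeModel, M' ∈ Cl →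
    ∀ w : M.W, ∀ w' : M'.W, ∀ m n : ℕ,
      Th F M n P2 Q2 w ⊆ Th F M' n P2 Q2 w' →
      ∃ Mst : KripkeModel, Mst ∈ Cl ∧ ∃ wst : Mst.W,
        Th F M n (P1 ∪ P2) (Q1 ∪ Q2) w ⊆ Th F Mst n (P1 ∪ P2) (Q1 ∪ Q2) wst ∧
        Th F Mst m (P2 ∪ P3) (Q2 ∪ Q3) wst ⊆ Th F M' m (P2 ∪ P3) (Q2 ∪ Q3) w'

/-!
KB is sound and complete for symmetric Kripke models, so the argument is semantic. Up to
equivalence there are finitely many (P₂,Q₂)-formulas of depth `≤ n`: disjunctive normal forms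
over literals and over `□ρ`, `◇ρ` for representatives `ρ` of depth `n - 1`. Hence inclusion of
depth-`k` theories is expressed by single formulas, and it is a layered (P₂,Q₂)-bisimulation.

With `P₂ = v⁺(φ) \ P` and `Q₂ = v⁻(φ) \ Q`, the interpolant `θ` is the conjunction of the
representatives of depth `≤ d(φ)` that KB derives from `φ`. If `w' ⊨ θ` in a symmetric model,
some `w ⊨ φ` has its depth-`d(φ)` theory contained in that of `w'`: otherwise `φ` would entail
the disjunction of the representatives false at `w'`, which is equivalent to a conjunct of `θ`.
Gluing the two models in layers along this theory inclusion gives a symmetric model with a world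
that satisfies `φ` as `w` does and every `ψ` avoiding `P` positively and `Q` negatively as `w'`
does, so `KB ⊢ φ → ψ` yields `w' ⊨ ψ`.
-/

open Formula

namespace Formula

def or (φ ψ : Formula) : Formula := φ.neg.imp ψ

end Formula

def disjList : List Formula → Formula
  | [] => .bot
  | φ :: l => φ.or (disjList l)

noncomputable def conjSet (s : Finset Formula) : Formula := conjList s.toList

noncomputable def disjSet (s : Finset Formula) : Formula := disjList s.toList

section Connectives

variable {P Q : Finset ℕ} {φ ψ : Formula}

@[simp] theorem pqFormula_var {p : ℕ} : PQFormula P Q (var p) ↔ p ∈ P := by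
  simp [PQFormula, vpos, vneg, vsgn]

@[simp] theorem pqFormula_bot : PQFormula P Q bot := by
  simp [PQFormula, vpos, vneg, vsgn]

@[simp] theorem pqFormula_imp :
    PQFormula P Q (φ.imp ψ) ↔ PQFormula Q P φ ∧ PQFormula P Q ψ := by
  simp only [PQFormula, vpos, vneg, vsgn, Bool.not_true, Bool.not_false, Finset.union_subset_iff]
  tauto

@[simp] theorem pqFormula_box : PQFormula P Q φ.box ↔ PQFormula P Q φ := Iff.rfl

@[simp] theorem pqFormula_neg : PQFormula P Q φ.neg ↔ PQFormula Q P φ := by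
  simp [Formula.neg]

@[simp] theorem pqFormula_top : PQFormula P Q top := by
  simp [Formula.top]

@[simp] theorem pqFormula_and :
    PQFormula P Q (φ.and ψ) ↔ PQFormula P Q φ ∧ PQFormula P Q ψ := by
  simp [Formula.and]

@[simp] theorem pqFormula_or :
    PQFormula P Q (φ.or ψ) ↔ PQFormula P Q φ ∧ PQFormula P Q ψ := by
  simp [Formula.or]

@[simp] theorem pqFormula_dia : PQFormula P Q φ.dia ↔ PQFormula P Q φ := by
  simp [Formula.dia]

theorem pqFormula_conjList {l : List Formula} (h : ∀ ρ ∈ l, PQFormula P Q ρ) :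
    PQFormula P Q (conjList l) := by
  induction l with
  | nil => simp [conjList]
  | cons a l ih => simp_all [conjList]

theorem pqFormula_disjList {l : List Formula} (h : ∀ ρ ∈ l, PQFormula P Q ρ) :
    PQFormula P Q (disjList l) := by
  induction l with
  | nil => simp [disjList]
  | cons a l ih => simp_all [disjList]

theorem pqFormula_conjSet {s : Finset Formula} (h : ∀ ρ ∈ s, PQFormula P Q ρ) :
    PQFormula P Q (conjSet s) :=
  pqFormula_conjList fun ρ hρ => h ρ (Finset.mem_toList.1 hρ)

theorem pqFormula_disjSet {s : Finset Formula} (h : ∀ ρ ∈ s, PQFormula P Q ρ) :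
    PQFormula P Q (disjSet s) :=
  pqFormula_disjList fun ρ hρ => h ρ (Finset.mem_toList.1 hρ)

@[simp] theorem depth_neg : φ.neg.depth = φ.depth := by
  simp [Formula.neg, depth]

@[simp] theorem depth_and : (φ.and ψ).depth = max φ.depth ψ.depth := by
  simp [Formula.and, depth]

@[simp] theorem depth_or : (φ.or ψ).depth = max φ.depth ψ.depth := by
  simp [Formula.or, depth]

@[simp] theorem depth_dia : φ.dia.depth = φ.depth + 1 := by
  simp [Formula.dia, depth]

theorem depth_conjList_le {l : List Formula} {n : ℕ} (h : ∀ ρ ∈ l, ρ.depth ≤ n) :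
    (conjList l).depth ≤ n := by
  induction l with
  | nil => simp [conjList, Formula.top, depth]
  | cons a l ih => simp_all [conjList]

theorem depth_disjList_le {l : List Formula} {n : ℕ} (h : ∀ ρ ∈ l, ρ.depth ≤ n) :
    (disjList l).depth ≤ n := by
  induction l with
  | nil => simp [disjList, depth]
  | cons a l ih => simp_all [disjList]

theorem depth_conjSet_le {s : Finset Formula} {n : ℕ} (h : ∀ ρ ∈ s, ρ.depth ≤ n) :
    (conjSet s).depth ≤ n :=
  depth_conjList_le fun ρ hρ => h ρ (Finset.mem_toList.1 hρ)

theorem depth_disjSet_le {s : Finset Formula} {n : ℕ} (h : ∀ ρ ∈ s, ρ.depth ≤ n) :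
    (disjSet s).depth ≤ n :=
  depth_disjList_le fun ρ hρ => h ρ (Finset.mem_toList.1 hρ)

end Connectives

namespace KripkeModel

variable {M : KripkeModel} {w : M.W} {φ ψ : Formula}

@[simp] theorem sat_bot : M.Sat bot w ↔ False := Iff.rfl
@[simp] theorem sat_imp : M.Sat (φ.imp ψ) w ↔ (M.Sat φ w → M.Sat ψ w) := Iff.rfl
@[simp] theorem sat_box : M.Sat φ.box w ↔ ∀ x, M.rel w x → M.Sat φ x := Iff.rfl
@[simp] theorem sat_neg : M.Sat φ.neg w ↔ ¬M.Sat φ w := Iff.rfl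

@[simp] theorem sat_top : M.Sat top w := id

@[simp] theorem sat_and : M.Sat (φ.and ψ) w ↔ M.Sat φ w ∧ M.Sat ψ w := by
  simp [Formula.and]

@[simp] theorem sat_or : M.Sat (φ.or ψ) w ↔ M.Sat φ w ∨ M.Sat ψ w := by
  simp only [Formula.or, sat_imp, sat_neg]
  tauto

@[simp] theorem sat_dia : M.Sat φ.dia w ↔ ∃ x, M.rel w x ∧ M.Sat φ x := by
  simp [Formula.dia]

theorem sat_conjList {l : List Formula} : M.Sat (conjList l) w ↔ ∀ χ ∈ l, M.Sat χ w := by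
  induction l with
  | nil => simp [conjList]
  | cons a l ih => simp [conjList, ih]

theorem sat_disjList {l : List Formula} : M.Sat (disjList l) w ↔ ∃ χ ∈ l, M.Sat χ w := by
  induction l with
  | nil => simp [disjList]
  | cons a l ih => simp [disjList, ih]

@[simp] theorem sat_conjSet {s : Finset Formula} :
    M.Sat (conjSet s) w ↔ ∀ χ ∈ s, M.Sat χ w := by
  simp [conjSet, sat_conjList]

@[simp] theorem sat_disjSet {s : Finset Formula} :
    M.Sat (disjSet s) w ↔ ∃ χ ∈ s, M.Sat χ w := by
  simp [disjSet, sat_disjList]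

theorem sat_of_tautology (h : Tautology φ) : M.Sat φ w := by
  classical
  simpa using h (fun χ => decide (M.Sat χ w)) (by simp)
    (fun ψ θ => by by_cases M.Sat ψ w <;> simp [*])

def substModel (M : KripkeModel) (σ : ℕ → Formula) : KripkeModel :=
  ⟨M.W, M.nonempty, M.rel, fun w p => M.Sat (σ p) w⟩

theorem sat_subst {σ : ℕ → Formula} : ∀ {φ : Formula} {w : M.W},
    M.Sat (φ.subst σ) w ↔ (M.substModel σ).Sat φ w
  | var _, _ => Iff.rfl
  | bot, _ => Iff.rfl
  | imp _ _, _ => imp_congr sat_subst sat_subst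
  | box _, _ => forall₂_congr fun _ _ => sat_subst

end KripkeModel

open KripkeModel

def SemEquiv (φ ψ : Formula) : Prop := ∀ (M : KripkeModel) (w : M.W), M.Sat φ w ↔ M.Sat ψ w

def frameLogic (C : ∀ W : Type, (W → W → Prop) → Prop) : Set Formula :=
  {φ | ∀ M : KripkeModel, C M.W M.rel → ∀ w, M.Sat φ w}

theorem isNormal_frameLogic (C : ∀ W : Type, (W → W → Prop) → Prop) :
    IsNormal (frameLogic C) where
  taut _ h _ _ _ := sat_of_tautology h
  axK _ _ _ h₁ h₂ x hx := h₁ x hx (h₂ x hx)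
  mp _ _ h₁ h₂ M hM w := h₁ M hM w (h₂ M hM w)
  nec _ h M hM _ x _ := h M hM x
  subst_mem _ h σ M hM _ := sat_subst.2 (h (M.substModel σ) hM _)

section NormalLogic

variable {L : Set Formula}

theorem isNormal_normalExt (X : Set Formula) : IsNormal (NormalExt X) where
  taut φ h _ hL := hL.1.taut φ h
  axK _ hL := hL.1.axK
  mp φ ψ h₁ h₂ _ hL := hL.1.mp φ ψ (h₁ _ hL) (h₂ _ hL)
  nec φ h _ hL := hL.1.nec φ (h _ hL)
  subst_mem φ h σ _ hL := hL.1.subst_mem φ (h _ hL) σ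

theorem subset_normalExt (X : Set Formula) : X ⊆ NormalExt X := fun _ h _ hL => hL.2 h

theorem normalExt_subset {X : Set Formula} (hL : IsNormal L) (hX : X ⊆ L) : NormalExt X ⊆ L :=
  fun _ h => h L ⟨hL, hX⟩

namespace IsNormal

variable {a b c f φ : Formula}

theorem mp_of_tautology (hL : IsNormal L) (ht : Tautology (a.imp b)) (ha : a ∈ L) : b ∈ L :=
  hL.mp _ _ (hL.taut _ ht) ha

theorem mp₂_of_tautology (hL : IsNormal L) (ht : Tautology (a.imp (b.imp c))) (ha : a ∈ L)
    (hb : b ∈ L) : c ∈ L :=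
  hL.mp _ _ (hL.mp_of_tautology ht ha) hb

theorem imp_trans (hL : IsNormal L) (h₁ : a.imp b ∈ L) (h₂ : b.imp c ∈ L) : a.imp c ∈ L :=
  hL.mp₂_of_tautology (a := a.imp b) (b := b.imp c)
    (fun v _ hi => by simp only [hi]; cases v a <;> cases v b <;> cases v c <;> rfl) h₁ h₂

theorem imp_of_mem (hL : IsNormal L) (h : b ∈ L) : a.imp b ∈ L :=
  hL.mp_of_tautology (fun v _ hi => by simp only [hi]; cases v a <;> cases v b <;> rfl) h

theorem box_imp_mem (hL : IsNormal L) : (a.imp b).box.imp (a.box.imp b.box) ∈ L := by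
  simpa [Formula.subst] using hL.subst_mem _ hL.axK fun n => if n = 0 then a else b

theorem box_imp_box (hL : IsNormal L) (h : a.imp b ∈ L) : a.box.imp b.box ∈ L :=
  hL.mp _ _ hL.box_imp_mem (hL.nec _ h)

theorem imp_dia_box_mem (hL : IsNormal L) (hB : axB ∈ L) : a.imp a.dia.box ∈ L := by
  simpa [axB, Formula.subst, Formula.dia, Formula.neg] using hL.subst_mem _ hB fun _ => a

theorem imp_self_mem (hL : IsNormal L) : a.imp a ∈ L :=
  hL.taut _ fun v _ hi => by simp only [hi]; cases v a <;> rfl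

theorem neg_neg_imp_mem (hL : IsNormal L) : a.neg.neg.imp a ∈ L :=
  hL.taut _ fun v hb hi => by simp only [Formula.neg, hi, hb]; cases v a <;> rfl

theorem imp_neg_neg_mem (hL : IsNormal L) : a.imp a.neg.neg ∈ L :=
  hL.taut _ fun v hb hi => by simp only [Formula.neg, hi, hb]; cases v a <;> rfl

theorem top_mem (hL : IsNormal L) : top ∈ L :=
  hL.taut _ fun v hb hi => by simp only [Formula.top, Formula.neg, hi, hb]; rfl

theorem imp_and (hL : IsNormal L) (h₁ : f.imp a ∈ L) (h₂ : f.imp b ∈ L) :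
    f.imp (a.and b) ∈ L :=
  hL.mp₂_of_tautology (a := f.imp a) (b := f.imp b) (fun v hb hi => by
    simp only [Formula.and, Formula.neg, hi, hb]
    cases v f <;> cases v a <;> cases v b <;> rfl) h₁ h₂

theorem conjList_imp_of_mem (hL : IsNormal L) {l : List Formula} (h : φ ∈ l) :
    (conjList l).imp φ ∈ L := by
  induction l with
  | nil => simp at h
  | cons a l ih =>
    rcases List.mem_cons.1 h with rfl | h
    · exact hL.taut _ fun v hb hi => by
        simp only [conjList, Formula.and, Formula.neg, hi, hb]
        cases v φ <;> cases v (conjList l) <;> rfl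
    · refine hL.imp_trans (hL.taut _ fun v hb hi => ?_) (ih h)
      simp only [conjList, Formula.and, Formula.neg, hi, hb]
      cases v a <;> cases v (conjList l) <;> rfl

theorem imp_conjList (hL : IsNormal L) {l : List Formula} (h : ∀ χ ∈ l, f.imp χ ∈ L) :
    f.imp (conjList l) ∈ L := by
  induction l with
  | nil => exact hL.imp_of_mem hL.top_mem
  | cons a l ih => exact hL.imp_and (h a (by simp)) (ih fun χ hχ => h χ (by simp [hχ]))

theorem conjSet_imp_of_mem (hL : IsNormal L) {s : Finset Formula} (h : φ ∈ s) :
    (conjSet s).imp φ ∈ L :=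
  hL.conjList_imp_of_mem (Finset.mem_toList.2 h)

theorem imp_conjSet (hL : IsNormal L) {s : Finset Formula} (h : ∀ χ ∈ s, f.imp χ ∈ L) :
    f.imp (conjSet s) ∈ L :=
  hL.imp_conjList fun χ hχ => h χ (Finset.mem_toList.1 hχ)

theorem conjSet_imp_conjSet (hL : IsNormal L) {s t : Finset Formula} (h : s ⊆ t) :
    (conjSet t).imp (conjSet s) ∈ L :=
  hL.imp_conjSet fun _ hχ => hL.conjSet_imp_of_mem (h hχ)

theorem conjSet_imp_imp_of_insert (hL : IsNormal L) {s : Finset Formula}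
    (h : (conjSet (insert a s)).imp φ ∈ L) : (conjSet s).imp (a.imp φ) ∈ L := by
  have hins : ((conjSet s).and a).imp (conjSet (insert a s)) ∈ L := by
    refine hL.imp_conjSet fun χ hχ => ?_
    rcases Finset.mem_insert.1 hχ with rfl | hχ
    · exact hL.taut _ fun v hb hi => by
        simp only [Formula.and, Formula.neg, hi, hb]
        cases v χ <;> cases v (conjSet s) <;> rfl
    · refine hL.imp_trans (hL.taut _ fun v hb hi => ?_) (hL.conjSet_imp_of_mem hχ)
      simp only [Formula.and, Formula.neg, hi, hb]
      cases v a <;> cases v (conjSet s) <;> rfl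
  refine hL.mp_of_tautology (fun v hb hi => ?_) (hL.imp_trans hins h)
  simp only [Formula.and, Formula.neg, hi, hb]
  cases v a <;> cases v (conjSet s) <;> cases v φ <;> rfl

end IsNormal

end NormalLogic

section Consistency

variable {L : Set Formula} {Γ Δ : Set Formula} {φ ψ : Formula}

def Derives (L Γ : Set Formula) (φ : Formula) : Prop :=
  ∃ s : Finset Formula, ↑s ⊆ Γ ∧ (conjSet s).imp φ ∈ L

def Consistent (L Γ : Set Formula) : Prop := ¬Derives L Γ bot

theorem Derives.mono (h : Derives L Γ φ) (hΓ : Γ ⊆ Δ) : Derives L Δ φ :=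
  let ⟨s, hs, hφ⟩ := h; ⟨s, hs.trans hΓ, hφ⟩

theorem Consistent.mono (h : Consistent L Δ) (hΓ : Γ ⊆ Δ) : Consistent L Γ :=
  fun hd => h (hd.mono hΓ)

theorem derives_of_mem (hL : IsNormal L) (h : φ ∈ Γ) : Derives L Γ φ :=
  ⟨{φ}, by simpa using h, hL.conjSet_imp_of_mem (Finset.mem_singleton_self φ)⟩

theorem derives_of_mem_logic (hL : IsNormal L) (h : φ ∈ L) : Derives L Γ φ :=
  ⟨∅, by simp, hL.imp_of_mem h⟩

theorem Derives.mp (hL : IsNormal L) (h₁ : Derives L Γ (φ.imp ψ)) (h₂ : Derives L Γ φ) :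
    Derives L Γ ψ := by
  obtain ⟨s, hs, h₁⟩ := h₁
  obtain ⟨t, ht, h₂⟩ := h₂
  refine ⟨s ∪ t, by simpa using ⟨hs, ht⟩, ?_⟩
  refine hL.mp₂_of_tautology (a := (conjSet (s ∪ t)).imp (φ.imp ψ))
    (b := (conjSet (s ∪ t)).imp φ) (fun v hb hi => ?_)
    (hL.imp_trans (hL.conjSet_imp_conjSet Finset.subset_union_left) h₁)
    (hL.imp_trans (hL.conjSet_imp_conjSet Finset.subset_union_right) h₂)
  simp only [hi]
  cases v (conjSet (s ∪ t)) <;> cases v φ <;> cases v ψ <;> rfl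

theorem Derives.imp_of_insert (hL : IsNormal L) (h : Derives L (insert φ Γ) ψ) :
    Derives L Γ (φ.imp ψ) := by
  classical
  obtain ⟨s, hs, h⟩ := h
  refine ⟨s.erase φ, fun χ hχ => ?_, hL.conjSet_imp_imp_of_insert ?_⟩
  · obtain ⟨hne, hχ⟩ := Finset.mem_erase.1 hχ
    exact (Set.mem_insert_iff.1 (hs hχ)).resolve_left hne
  · exact hL.imp_trans (hL.conjSet_imp_conjSet (Finset.insert_erase_subset φ s)) h

theorem isOfFiniteCharacter_consistent :
    Order.IsOfFiniteCharacter {Γ | Consistent L Γ} := by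
  refine fun Γ => ⟨fun h Δ hΔ _ => h.mono hΔ, fun h ⟨s, hs, hbot⟩ => ?_⟩
  exact h s hs s.finite_toSet ⟨s, subset_rfl, hbot⟩

theorem Consistent.exists_maximal (h : Consistent L Γ) :
    ∃ Δ, Γ ⊆ Δ ∧ Maximal (Consistent L) Δ :=
  isOfFiniteCharacter_consistent.exists_maximal h

theorem consistent_neg_of_notMem (hL : IsNormal L) (h : φ ∉ L) : Consistent L {φ.neg} := by
  rintro ⟨s, hs, hbot⟩
  have hφ : φ.neg.imp bot ∈ L :=
    hL.imp_trans (hL.imp_conjSet fun χ hχ => (hs hχ : χ = φ.neg) ▸ hL.imp_self_mem) hbot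
  exact h (hL.mp _ _ hL.neg_neg_imp_mem hφ)

namespace Maximal

variable (hL : IsNormal L) (hΓ : Maximal (Consistent L) Γ)
include hL hΓ

theorem mem_of_derives (h : Derives L Γ φ) : φ ∈ Γ :=
  hΓ.mem_of_prop_insert fun hbot => hΓ.1 ((hbot.imp_of_insert hL).mp hL h)

theorem mem_of_mem_logic (h : φ ∈ L) : φ ∈ Γ :=
  hΓ.mem_of_derives hL (derives_of_mem_logic hL h)

theorem mp_mem (h₁ : φ.imp ψ ∈ Γ) (h₂ : φ ∈ Γ) : ψ ∈ Γ :=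
  hΓ.mem_of_derives hL ((derives_of_mem hL h₁).mp hL (derives_of_mem hL h₂))

theorem notMem_of_neg_mem (h : φ.neg ∈ Γ) : φ ∉ Γ :=
  fun hφ => hΓ.1 (derives_of_mem hL (hΓ.mp_mem hL h hφ))

theorem neg_mem_of_notMem (h : φ ∉ Γ) : φ.neg ∈ Γ := by
  refine hΓ.mem_of_derives hL (Derives.imp_of_insert hL ?_)
  by_contra hcons
  exact h (hΓ.mem_of_prop_insert hcons)

theorem imp_mem_iff : φ.imp ψ ∈ Γ ↔ (φ ∈ Γ → ψ ∈ Γ) := by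
  refine ⟨hΓ.mp_mem hL, fun h => ?_⟩
  by_cases hφ : φ ∈ Γ
  · exact hΓ.mp_mem hL (hΓ.mem_of_mem_logic hL (hL.taut _ fun v hb hi => by
      simp only [hi]; cases v φ <;> cases v ψ <;> rfl)) (h hφ)
  · exact hΓ.mp_mem hL (hΓ.mem_of_mem_logic hL (hL.taut _ fun v hb hi => by
      simp only [Formula.neg, hi, hb]; cases v φ <;> cases v ψ <;> rfl))
      (hΓ.neg_mem_of_notMem hL hφ)

theorem box_mem_of_derives (h : Derives L {χ : Formula | χ.box ∈ Γ} φ) : φ.box ∈ Γ := by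
  classical
  obtain ⟨s, hs, h⟩ := h
  induction s using Finset.induction_on generalizing φ with
  | empty =>
    refine hΓ.mem_of_mem_logic hL (hL.nec _ (hL.mp _ _ h ?_))
    simpa [conjSet, conjList] using hL.top_mem
  | insert a s _ ih =>
    have hs' : a.box ∈ Γ ∧ ↑s ⊆ {χ : Formula | χ.box ∈ Γ} := by
      simpa [Set.insert_subset_iff] using hs
    have himp := ih hs'.2 (hL.conjSet_imp_imp_of_insert h)
    exact hΓ.mp_mem hL (hΓ.mp_mem hL (hΓ.mem_of_mem_logic hL hL.box_imp_mem) himp) hs'.1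

theorem box_mem_of_forall
    (h : ∀ Δ, Maximal (Consistent L) Δ → (∀ χ, χ.box ∈ Γ → χ ∈ Δ) → φ ∈ Δ) :
    φ.box ∈ Γ := by
  by_contra hφ
  have hcons : Consistent L (insert φ.neg {χ | χ.box ∈ Γ}) := fun hbot =>
    hφ (hΓ.box_mem_of_derives hL
      ((derives_of_mem_logic hL hL.neg_neg_imp_mem).mp hL (hbot.imp_of_insert hL)))
  obtain ⟨Δ, hsub, hΔ⟩ := hcons.exists_maximal
  exact hΔ.notMem_of_neg_mem hL (hsub (Set.mem_insert _ _))
    (h Δ hΔ fun χ hχ => hsub (Set.mem_insert_of_mem _ hχ))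

end Maximal

end Consistency

section CanonicalModel

variable {L : Set Formula}

noncomputable def canonicalModel (L : Set Formula) (hL : IsNormal L) (hbot : bot ∉ L) :
    KripkeModel where
  W := {Γ : Set Formula // Maximal (Consistent L) Γ}
  nonempty :=
    let ⟨Γ, _, hΓ⟩ := (consistent_neg_of_notMem hL hbot).exists_maximal
    ⟨⟨Γ, hΓ⟩⟩
  rel Γ Δ := ∀ χ, χ.box ∈ Γ.1 → χ ∈ Δ.1
  val Γ p := var p ∈ Γ.1

variable (hL : IsNormal L) (hbot : bot ∉ L)

theorem canonicalModel_sat_iff :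
    ∀ {φ : Formula} {Γ : (canonicalModel L hL hbot).W},
      (canonicalModel L hL hbot).Sat φ Γ ↔ φ ∈ Γ.1
  | var _, _ => Iff.rfl
  | bot, Γ => iff_of_false id fun h => Γ.2.1 (derives_of_mem hL h)
  | imp _ _, Γ => (imp_congr canonicalModel_sat_iff canonicalModel_sat_iff).trans
      (Γ.2.imp_mem_iff hL).symm
  | box _, Γ => ⟨fun h => Γ.2.box_mem_of_forall hL fun Δ hΔ hΓΔ =>
      canonicalModel_sat_iff.1 (h ⟨Δ, hΔ⟩ hΓΔ),
    fun h _ hΓΔ => canonicalModel_sat_iff.2 (hΓΔ _ h)⟩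

theorem symm_canonicalModel (hB : axB ∈ L) : Std.Symm (canonicalModel L hL hbot).rel := by
  refine ⟨fun Γ Δ hΓΔ χ hχ => ?_⟩
  by_contra hχΓ
  have hdia : χ.neg.dia ∈ Δ.1 :=
    hΓΔ _ (Γ.2.mp_mem hL (Γ.2.mem_of_mem_logic hL (hL.imp_dia_box_mem hB))
      (Γ.2.neg_mem_of_notMem hL hχΓ))
  exact Δ.2.notMem_of_neg_mem hL hdia
    (Δ.2.mp_mem hL (Δ.2.mem_of_mem_logic hL (hL.box_imp_box hL.imp_neg_neg_mem)) hχ)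

end CanonicalModel

theorem frameLogic_symm_subset {L : Set Formula} (hL : IsNormal L) (hB : axB ∈ L) :
    frameLogic (fun _ r => Std.Symm r) ⊆ L := by
  intro φ hφ
  by_contra hφL
  have hbot : bot ∉ L := fun h => hφL (hL.mp_of_tautology (fun v hb hi => by simp [hi, hb]) h)
  obtain ⟨Γ, hsub, hΓ⟩ := (consistent_neg_of_notMem hL hφL).exists_maximal
  have hsat := hφ _ (symm_canonicalModel hL hbot hB) ⟨Γ, hΓ⟩
  exact hΓ.notMem_of_neg_mem hL (hsub rfl) ((canonicalModel_sat_iff hL hbot).1 hsat)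

theorem theoryKB_eq_frameLogic : TheoryKB = frameLogic fun _ r => Std.Symm r := by
  refine (normalExt_subset (isNormal_frameLogic _) ?_).antisymm
    (frameLogic_symm_subset (isNormal_normalExt _) (subset_normalExt _ rfl))
  rintro _ rfl M hM w hw x hx
  simpa using ⟨w, hM.symm _ _ hx, hw⟩

section Family

variable {A : Finset Formula} {n : ℕ} {P Q : Finset ℕ} {φ χ χ' ρ : Formula}

noncomputable def dnf (S : Finset (Finset Formula)) : Formula := disjSet (S.image conjSet)

@[simp] theorem sat_dnf {M : KripkeModel} {w : M.W} {S : Finset (Finset Formula)} :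
    M.Sat (dnf S) w ↔ ∃ t ∈ S, ∀ a ∈ t, M.Sat a w := by
  simp [dnf]

noncomputable def dnfs (A : Finset Formula) : Finset Formula := A.powerset.powerset.image dnf

def Expressible (A : Finset Formula) (χ : Formula) : Prop := ∃ ρ ∈ dnfs A, SemEquiv χ ρ

theorem expressible_iff :
    Expressible A χ ↔ ∃ S ⊆ A.powerset, ∀ (M : KripkeModel) (w : M.W),
      M.Sat χ w ↔ ∃ t ∈ S, ∀ a ∈ t, M.Sat a w := by
  simp [Expressible, dnfs, SemEquiv]

theorem Expressible.congr (h : Expressible A χ) (he : SemEquiv χ χ') : Expressible A χ' :=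
  let ⟨ρ, hρ, hχρ⟩ := h; ⟨ρ, hρ, fun M w => (he M w).symm.trans (hχρ M w)⟩

theorem expressible_of_mem (h : χ ∈ A) : Expressible A χ :=
  expressible_iff.2 ⟨{{χ}}, by simpa using h, by simp⟩

theorem expressible_bot : Expressible A bot :=
  expressible_iff.2 ⟨∅, by simp, by simp⟩

theorem expressible_top : Expressible A top :=
  expressible_iff.2 ⟨{∅}, by simp, by simp⟩

theorem Expressible.or (h : Expressible A χ) (h' : Expressible A χ') :
    Expressible A (χ.or χ') := by
  obtain ⟨S, hS, hχ⟩ := expressible_iff.1 h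
  obtain ⟨S', hS', hχ'⟩ := expressible_iff.1 h'
  refine expressible_iff.2 ⟨S ∪ S', Finset.union_subset hS hS', fun M w => ?_⟩
  simp only [KripkeModel.sat_or, hχ, hχ', Finset.mem_union]
  grind

theorem Expressible.and (h : Expressible A χ) (h' : Expressible A χ') :
    Expressible A (χ.and χ') := by
  classical
  obtain ⟨S, hS, hχ⟩ := expressible_iff.1 h
  obtain ⟨S', hS', hχ'⟩ := expressible_iff.1 h'
  refine expressible_iff.2 ⟨Finset.image₂ (· ∪ ·) S S', fun u hu => ?_, fun M w => ?_⟩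
  · obtain ⟨t, ht, t', ht', rfl⟩ := Finset.mem_image₂.1 hu
    exact Finset.mem_powerset.2 (Finset.union_subset (Finset.mem_powerset.1 (hS ht))
      (Finset.mem_powerset.1 (hS' ht')))
  · simp only [KripkeModel.sat_and, hχ, hχ', Finset.mem_image₂]
    grind

def literals (P Q : Finset ℕ) : Finset Formula := P.image var ∪ Q.image fun q => (var q).neg

noncomputable def atoms (P Q : Finset ℕ) : ℕ → Finset Formula
  | 0 => literals P Q
  | n + 1 => literals P Q ∪ (dnfs (atoms P Q n)).image box ∪ (dnfs (atoms P Q n)).image dia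

noncomputable def fam (n : ℕ) (P Q : Finset ℕ) : Finset Formula := dnfs (atoms P Q n)

theorem literals_subset_atoms : literals P Q ⊆ atoms P Q n := by
  cases n <;> simp [atoms, Finset.union_assoc]

theorem box_mem_atoms (h : ρ ∈ fam n P Q) : ρ.box ∈ atoms P Q (n + 1) := by
  simp [atoms, fam] at h ⊢
  tauto

theorem dia_mem_atoms (h : ρ ∈ fam n P Q) : ρ.dia ∈ atoms P Q (n + 1) := by
  simp [atoms, fam] at h ⊢
  tauto

theorem pqFormula_of_mem_dnfs (hA : ∀ a ∈ A, PQFormula P Q a ∧ a.depth ≤ n) (h : ρ ∈ dnfs A) :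
    PQFormula P Q ρ ∧ ρ.depth ≤ n := by
  obtain ⟨S, hS, rfl⟩ := Finset.mem_image.1 h
  have hconj : ∀ c ∈ S.image conjSet, PQFormula P Q c ∧ c.depth ≤ n := by
    simp only [Finset.mem_image]
    rintro _ ⟨t, ht, rfl⟩
    have ht : ∀ a ∈ t, PQFormula P Q a ∧ a.depth ≤ n := fun a ha =>
      hA a (Finset.mem_powerset.1 (Finset.mem_powerset.1 hS ht) ha)
    exact ⟨pqFormula_conjSet fun a ha => (ht a ha).1, depth_conjSet_le fun a ha => (ht a ha).2⟩
  exact ⟨pqFormula_disjSet fun c hc => (hconj c hc).1,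
    depth_disjSet_le fun c hc => (hconj c hc).2⟩

theorem pqFormula_of_mem_literals (h : ρ ∈ literals P Q) :
    PQFormula P Q ρ ∧ ρ.depth = 0 := by
  simp only [literals, Finset.mem_union, Finset.mem_image] at h
  rcases h with ⟨p, hp, rfl⟩ | ⟨q, hq, rfl⟩ <;> simp [*, depth]

theorem pqFormula_of_mem_atoms (h : ρ ∈ atoms P Q n) : PQFormula P Q ρ ∧ ρ.depth ≤ n := by
  induction n generalizing ρ with
  | zero => exact (pqFormula_of_mem_literals h).imp_right le_of_eq
  | succ n ih =>
    simp only [atoms, Finset.mem_union, Finset.mem_image] at h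
    rcases h with (h | ⟨σ, hσ, rfl⟩) | ⟨σ, hσ, rfl⟩
    · exact (pqFormula_of_mem_literals h).imp_right fun h => by omega
    · simpa [depth] using pqFormula_of_mem_dnfs (fun _ => ih) hσ
    · simpa using pqFormula_of_mem_dnfs (fun _ => ih) hσ

theorem pqFormula_of_mem_fam (h : ρ ∈ fam n P Q) : PQFormula P Q ρ ∧ ρ.depth ≤ n :=
  pqFormula_of_mem_dnfs (fun _ => pqFormula_of_mem_atoms) h

/-- Negated (Q,P)-formulas are treated simultaneously because they occur as antecedents of
implications. -/
theorem expressible_atoms (hd : φ.depth ≤ n) :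
    (PQFormula P Q φ → Expressible (atoms P Q n) φ) ∧
      (PQFormula Q P φ → Expressible (atoms P Q n) φ.neg) := by
  induction φ generalizing n with
  | var p =>
    refine ⟨fun hp => expressible_of_mem (literals_subset_atoms ?_),
      fun hp => expressible_of_mem (literals_subset_atoms ?_)⟩ <;>
    simp_all [literals, Formula.neg]
  | bot => exact ⟨fun _ => expressible_bot, fun _ => expressible_top⟩
  | imp α β ihα ihβ =>
    simp only [depth, max_le_iff] at hd
    refine ⟨fun h => ?_, fun h => ?_⟩ <;> simp only [pqFormula_imp] at h
    · refine ((ihα hd.1).2 h.1).or ((ihβ hd.2).1 h.2) |>.congr fun M w => ?_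
      simp only [KripkeModel.sat_or, KripkeModel.sat_neg, KripkeModel.sat_imp]
      tauto
    · refine ((ihα hd.1).1 h.1).and ((ihβ hd.2).2 h.2) |>.congr fun M w => ?_
      simp only [KripkeModel.sat_and, KripkeModel.sat_neg, KripkeModel.sat_imp]
      tauto
  | box ψ ih =>
    obtain ⟨m, rfl⟩ : ∃ m, n = m + 1 := Nat.exists_eq_add_one.2 (by simp [depth] at hd; omega)
    have hd : ψ.depth ≤ m := by simp [depth] at hd; omega
    refine ⟨fun h => ?_, fun h => ?_⟩
    · obtain ⟨ρ, hρ, hψρ⟩ := (ih hd).1 h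
      exact (expressible_of_mem (box_mem_atoms hρ)).congr fun M w =>
        (forall₂_congr fun x _ => hψρ M x).symm
    · obtain ⟨ρ, hρ, hψρ⟩ := (ih hd).2 h
      refine (expressible_of_mem (dia_mem_atoms hρ)).congr fun M w => ?_
      simp only [KripkeModel.sat_dia, KripkeModel.sat_neg, KripkeModel.sat_box, not_forall,
        exists_prop, ← hψρ M]

theorem exists_mem_fam_semEquiv (hφ : PQFormula P Q φ) (hd : φ.depth ≤ n) :
    ∃ ρ ∈ fam n P Q, SemEquiv φ ρ :=
  (expressible_atoms hd).1 hφ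

end Family

section TheorySubset

variable {P Q : Finset ℕ} {M M' : KripkeModel} {x : M.W} {y : M'.W} {k : ℕ}

/-- `Th_k^{(P,Q)}(x) ⊆ Th_k^{(P,Q)}(y)`, with all formulas in place of a finite family. -/
def TheorySubset (P Q : Finset ℕ) (M M' : KripkeModel) (x : M.W) (k : ℕ) (y : M'.W) : Prop :=
  ∀ χ, PQFormula P Q χ → χ.depth ≤ k → M.Sat χ x → M'.Sat χ y

theorem theorySubset_iff_fam :
    TheorySubset P Q M M' x k y ↔ ∀ ρ ∈ fam k P Q, M.Sat ρ x → M'.Sat ρ y := by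
  refine ⟨fun h ρ hρ => h ρ (pqFormula_of_mem_fam hρ).1 (pqFormula_of_mem_fam hρ).2,
    fun h χ hχ hd hx => ?_⟩
  obtain ⟨ρ, hρ, hχρ⟩ := exists_mem_fam_semEquiv hχ hd
  exact (hχρ M' y).2 (h ρ hρ ((hχρ M x).1 hx))

open Classical in
noncomputable def charConj (P Q : Finset ℕ) (k : ℕ) (M : KripkeModel) (x : M.W) : Formula :=
  conjSet ((fam k P Q).filter fun ρ => M.Sat ρ x)

open Classical in
noncomputable def charDisj (P Q : Finset ℕ) (k : ℕ) (M : KripkeModel) (y : M.W) : Formula :=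
  disjSet ((fam k P Q).filter fun ρ => ¬M.Sat ρ y)

open Classical in
theorem pqFormula_charConj : PQFormula P Q (charConj P Q k M x) :=
  pqFormula_conjSet fun _ hρ => (pqFormula_of_mem_fam (Finset.mem_filter.1 hρ).1).1

open Classical in
theorem depth_charConj_le : (charConj P Q k M x).depth ≤ k :=
  depth_conjSet_le fun _ hρ => (pqFormula_of_mem_fam (Finset.mem_filter.1 hρ).1).2

open Classical in
theorem pqFormula_charDisj : PQFormula P Q (charDisj P Q k M' y) :=
  pqFormula_disjSet fun _ hρ => (pqFormula_of_mem_fam (Finset.mem_filter.1 hρ).1).1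

open Classical in
theorem depth_charDisj_le : (charDisj P Q k M' y).depth ≤ k :=
  depth_disjSet_le fun _ hρ => (pqFormula_of_mem_fam (Finset.mem_filter.1 hρ).1).2

open Classical in
theorem theorySubset_iff_sat_charConj :
    TheorySubset P Q M M' x k y ↔ M'.Sat (charConj P Q k M x) y := by
  simp [charConj, theorySubset_iff_fam]

open Classical in
theorem theorySubset_iff_not_sat_charDisj :
    TheorySubset P Q M M' x k y ↔ ¬M.Sat (charDisj P Q k M' y) x := by
  simp [charDisj, theorySubset_iff_fam, not_imp_not]

theorem sat_charConj_self : M.Sat (charConj P Q k M x) x :=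
  theorySubset_iff_sat_charConj.1 fun _ _ _ => id

theorem not_sat_charDisj_self : ¬M'.Sat (charDisj P Q k M' y) y :=
  theorySubset_iff_not_sat_charDisj.1 fun _ _ _ => id

theorem TheorySubset.forth (h : TheorySubset P Q M M' x (k + 1) y) {u : M.W} (hxu : M.rel x u) :
    ∃ v, M'.rel y v ∧ TheorySubset P Q M M' u k v := by
  have hdia := h _ (pqFormula_dia.2 pqFormula_charConj) (by simpa using depth_charConj_le)
    (KripkeModel.sat_dia.2 ⟨u, hxu, sat_charConj_self⟩)
  obtain ⟨v, hyv, hv⟩ := KripkeModel.sat_dia.1 hdia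
  exact ⟨v, hyv, theorySubset_iff_sat_charConj.2 hv⟩

theorem TheorySubset.back (h : TheorySubset P Q M M' x (k + 1) y) {v : M'.W} (hyv : M'.rel y v) :
    ∃ u, M.rel x u ∧ TheorySubset P Q M M' u k v := by
  by_contra! hnot
  have hbox := h _ (pqFormula_box.2 pqFormula_charDisj)
    (Nat.succ_le_succ depth_charDisj_le) fun u hxu =>
      not_not.1 (theorySubset_iff_not_sat_charDisj.not.1 (hnot u hxu))
  exact not_sat_charDisj_self (hbox v hyv)

theorem layeredBisim_theorySubset : LayeredBisim P Q M M' (TheorySubset P Q M M') :=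
  ⟨fun _ _ _ h => ⟨fun p hp => h (var p) (by simpa using hp) (by simp [depth]),
      fun q hq => h (var q).neg (by simpa using hq) (by simp [depth])⟩,
    fun _ _ _ h _ hxu => h.forth hxu, fun _ _ _ h _ hyv => h.back hyv⟩

end TheorySubset

namespace KripkeModel

section Glue

variable (M M' : KripkeModel) (Z : M.W → ℕ → M'.W → Prop) (A B : Finset ℕ)

/-- The worlds are the `Z`-related triples `(x, k, y)`, which read the variables in `A` off `x` and
those in `B` off `y`, together with a copy of `M'`. Since `Z x 0 y` has no back-and-forth condition,
the successors of a layer-`0` world are taken from `M'` alone. -/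
def glue : KripkeModel where
  W := {t : M.W × ℕ × M'.W // Z t.1 t.2.1 t.2.2} ⊕ M'.W
  nonempty := ⟨.inr M'.nonempty.some⟩
  rel
    | .inl ⟨(x, k, y), _⟩, .inl ⟨(u, j, v), _⟩ =>
      M.rel x u ∧ M'.rel y v ∧ (j = k + 1 ∨ k = j + 1)
    | .inl ⟨(_, k, y), _⟩, .inr v => k = 0 ∧ M'.rel y v
    | .inr y, .inl ⟨(_, j, v), _⟩ => j = 0 ∧ M'.rel y v
    | .inr y, .inr v => M'.rel y v
  val
    | .inl ⟨(x, _, y), _⟩, p => (p ∈ A ∧ M.val x p) ∨ (p ∈ B ∧ M'.val y p)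
    | .inr y, p => M'.val y p

variable {M M' Z A B}

def glueProj : (glue M M' Z A B).W → M'.W
  | .inl t => t.1.2.2
  | .inr y => y

theorem symm_glue (hM : Std.Symm M.rel) (hM' : Std.Symm M'.rel) :
    Std.Symm (glue M M' Z A B).rel := by
  refine ⟨?_⟩
  rintro (⟨⟨x, k, y⟩, _⟩ | y) (⟨⟨u, j, v⟩, _⟩ | v) h
  · exact ⟨hM.symm _ _ h.1, hM'.symm _ _ h.2.1, h.2.2.symm⟩
  · exact ⟨h.1, hM'.symm _ _ h.2⟩
  · exact ⟨h.1, hM'.symm _ _ h.2⟩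
  · exact hM'.symm _ _ h

theorem rel_glueProj {a b : (glue M M' Z A B).W} (h : (glue M M' Z A B).rel a b) :
    M'.rel (glueProj a) (glueProj b) := by
  rcases a with ⟨⟨x, k, y⟩, _⟩ | y <;> rcases b with ⟨⟨u, j, v⟩, _⟩ | v
  exacts [h.2.1, h.2, h.2, h]

variable {P Q : Finset ℕ}

theorem glue_preserves_left (hZ : LayeredBisim P Q M M' Z) {C : Finset ℕ} (hC : C ∩ B ⊆ Q) :
    ∀ (φ : Formula) {x : M.W} {k : ℕ} {y : M'.W} (hxy : Z x k y), φ.depth ≤ k →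
      (PQFormula A C φ → M.Sat φ x → (glue M M' Z A B).Sat φ (.inl ⟨(x, k, y), hxy⟩)) ∧
      (PQFormula C A φ → (glue M M' Z A B).Sat φ (.inl ⟨(x, k, y), hxy⟩) → M.Sat φ x)
  | var p, x, k, y, hxy, _ => by
    refine ⟨fun hp hx => .inl ⟨pqFormula_var.1 hp, hx⟩, fun hp h => ?_⟩
    rcases h with ⟨_, hx⟩ | ⟨hpB, hy⟩
    · exact hx
    · by_contra hx
      exact (hZ.1 x k y hxy).2 p (hC (Finset.mem_inter.2 ⟨pqFormula_var.1 hp, hpB⟩)) hx hy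
  | bot, _, _, _, _, _ => ⟨fun _ => id, fun _ => id⟩
  | imp α β, x, k, y, hxy, hd => by
    simp only [depth, max_le_iff] at hd
    have ihα := glue_preserves_left hZ hC α hxy hd.1
    have ihβ := glue_preserves_left hZ hC β hxy hd.2
    simp only [pqFormula_imp, sat_imp]
    exact ⟨fun h hx hα => ihβ.1 h.2 (hx (ihα.2 h.1 hα)),
      fun h hx hα => ihβ.2 h.2 (hx (ihα.1 h.1 hα))⟩
  | box δ, x, k, y, hxy, hd => by
    obtain ⟨j, rfl⟩ : ∃ j, k = j + 1 := Nat.exists_eq_add_one.2 (by simp [depth] at hd; omega)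
    simp only [depth] at hd
    refine ⟨fun hδ hx => ?_, fun hδ hx u hxu => ?_⟩
    · rintro (⟨⟨u, m, v⟩, huv⟩ | v) hedge
      · obtain ⟨hxu, -, hm⟩ := hedge
        exact (glue_preserves_left hZ hC δ huv (by dsimp only; omega)).1 hδ (hx u hxu)
      · exact absurd hedge.1 (Nat.succ_ne_zero j)
    · obtain ⟨v, hyv, huv⟩ := hZ.2.1 x j y hxy u hxu
      exact (glue_preserves_left hZ hC δ huv (by omega)).2 hδ (hx _ ⟨hxu, hyv, .inr rfl⟩)

theorem glue_preserves_right (hZ : LayeredBisim P Q M M' Z) {C : Finset ℕ} (hC : A ∩ C ⊆ P) :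
    ∀ (φ : Formula) (a : (glue M M' Z A B).W),
      (PQFormula C B φ → (glue M M' Z A B).Sat φ a → M'.Sat φ (glueProj a)) ∧
      (PQFormula B C φ → M'.Sat φ (glueProj a) → (glue M M' Z A B).Sat φ a)
  | var p, .inl ⟨(x, k, y), hxy⟩ => by
    refine ⟨fun hp h => ?_, fun hp hy => .inr ⟨pqFormula_var.1 hp, hy⟩⟩
    rcases h with ⟨hpA, hx⟩ | ⟨_, hy⟩
    · exact (hZ.1 x k y hxy).1 p (hC (Finset.mem_inter.2 ⟨hpA, pqFormula_var.1 hp⟩)) hx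
    · exact hy
  | var _, .inr _ => ⟨fun _ => id, fun _ => id⟩
  | bot, _ => ⟨fun _ => id, fun _ => id⟩
  | imp α β, a => by
    have ihα := glue_preserves_right hZ hC α a
    have ihβ := glue_preserves_right hZ hC β a
    simp only [pqFormula_imp, sat_imp]
    exact ⟨fun h hx hα => ihβ.1 h.2 (hx (ihα.2 h.1 hα)),
      fun h hx hα => ihβ.2 h.2 (hx (ihα.1 h.1 hα))⟩
  | box δ, a => by
    refine ⟨fun hδ ha v hv => ?_, fun hδ ha b hab => ?_⟩
    · rcases a with ⟨⟨x, _ | j, y⟩, hxy⟩ | y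
      · exact (glue_preserves_right hZ hC δ (.inr v)).1 hδ (ha (.inr v) ⟨rfl, hv⟩)
      · obtain ⟨u, hxu, huv⟩ := hZ.2.2 x j y hxy v hv
        exact (glue_preserves_right hZ hC δ (.inl ⟨(u, j, v), huv⟩)).1 hδ
          (ha _ ⟨hxu, hv, .inr rfl⟩)
      · exact (glue_preserves_right hZ hC δ (.inr v)).1 hδ (ha (.inr v) hv)
    · exact (glue_preserves_right hZ hC δ b).2 hδ (ha _ (rel_glueProj hab))

end Glue

end KripkeModel

open KripkeModel

theorem inter_subset_sdiff_of_inter_eq_empty {s t u : Finset ℕ} (h : t ∩ u = ∅) :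
    s ∩ t ⊆ s \ u :=
  Finset.subset_sdiff.2 ⟨Finset.inter_subset_left, Finset.disjoint_of_subset_left
    Finset.inter_subset_right (Finset.disjoint_iff_inter_eq_empty.2 h)⟩

theorem sat_of_theorySubset {φ ψ : Formula} {P Q : Finset ℕ} {M M' : KripkeModel}
    (hM : Std.Symm M.rel) (hM' : Std.Symm M'.rel) {w : M.W} {w' : M'.W}
    (hψP : ψ.vpos ∩ P = ∅) (hψQ : ψ.vneg ∩ Q = ∅)
    (hφψ : φ.imp ψ ∈ frameLogic fun _ r => Std.Symm r)
    (hww' : TheorySubset (φ.vpos \ P) (φ.vneg \ Q) M M' w φ.depth w') (hw : M.Sat φ w) :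
    M'.Sat ψ w' := by
  -- A variable positive in both `φ` and `ψ` lies in `v⁺(φ) \ P`, one negative in both lies in
  -- `v⁻(φ) \ Q`; there `hww'` transfers its value from `w` to `w'` in the direction needed.
  let G := glue M M' (TheorySubset (φ.vpos \ P) (φ.vneg \ Q) M M') φ.vpos ψ.vneg
  have hφG : G.Sat φ (.inl ⟨(w, φ.depth, w'), hww'⟩) :=
    (glue_preserves_left layeredBisim_theorySubset
      (inter_subset_sdiff_of_inter_eq_empty hψQ) φ hww' le_rfl).1 ⟨subset_rfl, subset_rfl⟩ hw
  exact (glue_preserves_right layeredBisim_theorySubset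
    (inter_subset_sdiff_of_inter_eq_empty hψP) ψ _).1 ⟨subset_rfl, subset_rfl⟩
    (hφψ G (symm_glue hM hM') _ hφG)

open Classical in
noncomputable def uniformInterpolant (φ : Formula) (P Q : Finset ℕ) : Formula :=
  conjSet ((fam φ.depth (φ.vpos \ P) (φ.vneg \ Q)).filter fun ρ => φ.imp ρ ∈ TheoryKB)

section UniformInterpolant

variable {φ ψ : Formula} {P Q : Finset ℕ}

open Classical in
theorem pqFormula_uniformInterpolant :
    PQFormula (φ.vpos \ P) (φ.vneg \ Q) (uniformInterpolant φ P Q) :=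
  pqFormula_conjSet fun _ hρ => (pqFormula_of_mem_fam (Finset.mem_filter.1 hρ).1).1

open Classical in
theorem depth_uniformInterpolant_le : (uniformInterpolant φ P Q).depth ≤ φ.depth :=
  depth_conjSet_le fun _ hρ => (pqFormula_of_mem_fam (Finset.mem_filter.1 hρ).1).2

open Classical in
theorem imp_uniformInterpolant_mem : φ.imp (uniformInterpolant φ P Q) ∈ TheoryKB :=
  (isNormal_normalExt _).imp_conjSet fun _ hρ => (Finset.mem_filter.1 hρ).2

open Classical in
theorem uniformInterpolant_imp_mem (hψP : ψ.vpos ∩ P = ∅) (hψQ : ψ.vneg ∩ Q = ∅)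
    (hφψ : φ.imp ψ ∈ TheoryKB) : (uniformInterpolant φ P Q).imp ψ ∈ TheoryKB := by
  rw [theoryKB_eq_frameLogic] at hφψ ⊢
  intro M' hM' w' hθ
  set D := charDisj (φ.vpos \ P) (φ.vneg \ Q) φ.depth M' w'
  have hφD : φ.imp D ∉ frameLogic fun _ r => Std.Symm r := by
    intro hφD
    obtain ⟨ρ, hρ, hDρ⟩ :=
      exists_mem_fam_semEquiv (φ := D) pqFormula_charDisj depth_charDisj_le
    have hφρ : φ.imp ρ ∈ TheoryKB := by
      rw [theoryKB_eq_frameLogic]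
      exact fun M hM w hw => (hDρ M w).1 (hφD M hM w hw)
    have hρw' := sat_conjSet.1 hθ ρ (Finset.mem_filter.2 ⟨hρ, hφρ⟩)
    exact not_sat_charDisj_self ((hDρ M' w').2 hρw')
  simp only [frameLogic, Set.mem_ofPred_eq, sat_imp, not_forall, exists_prop] at hφD
  obtain ⟨M, hM, w, hw, hDw⟩ := hφD
  exact sat_of_theorySubset hM hM' hψP hψQ hφψ (theorySubset_iff_not_sat_charDisj.2 hDw) hw

theorem isULInterpolant_uniformInterpolant :
    IsULInterpolant TheoryKB φ P Q (uniformInterpolant φ P Q) :=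
  ⟨pqFormula_uniformInterpolant.1, pqFormula_uniformInterpolant.2, imp_uniformInterpolant_mem,
    fun _ hψP hψQ hφψ => uniformInterpolant_imp_mem hψP hψQ hφψ⟩

end UniformInterpolant

/-- KB enjoys ULIP, with interpolants of depth at most d(φ). -/
theorem ulip_KB : ULIP TheoryKB ∧
    ∀ (φ : Formula) (P Q : Finset ℕ), ∃ θ : Formula,
      IsULInterpolant TheoryKB φ P Q θ ∧ θ.depth ≤ φ.depth :=
  ⟨fun _ _ _ => ⟨_, isULInterpolant_uniformInterpolant⟩,
    fun _ _ _ => ⟨_, isULInterpolant_uniformInterpolant, depth_uniformInterpolant_le⟩⟩
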